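/- Assume V satisfies (V1)–(V3) and A is bounded, continuous on the closure of Ω, and satisfies the Class 2 condition (A3). Then limsup_{ε→0⁺} Θ_ε ≤ Θ_0, where Θ_ε = inf_Γ J_ε with J_ε(U) = ∫_Ω ( (1/2)|∇U|² + A(εx,y)V(U) ) dxdy and Θ_0 = inf_Γ J_0 with J_0(U) = ∫_Ω ( (1/2)|∇U|² + A₀ V(U) ) dxdy. -/

import Mathlib

open MeasureTheory Filter Topology
open scoped ENNReal

noncomputable section

namespace Het

variable {d : ℕ}

/-- Points of the infinite cylinder `ℝ × ℝ^d`. -/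
abbrev Pt (d : ℕ) := ℝ × EuclideanSpace ℝ (Fin d)

/-- The infinite cylinder `Ω = ℝ × D`. -/
def Omeg (D : Set (EuclideanSpace ℝ (Fin d))) : Set (Pt d) := Set.univ ×ˢ D

/-- The slab `(a,b) × D`. -/
def slab (a b : ℝ) (D : Set (EuclideanSpace ℝ (Fin d))) : Set (Pt d) := Set.Ioo a b ×ˢ D

/-- `Ω₁ = (0,1) × D`. -/
def Omeg1 (D : Set (EuclideanSpace ℝ (Fin d))) : Set (Pt d) := slab 0 1 D

/-- The translate `(P_k U)(x,y) = U(x+k,y)`. -/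
def Ptr (k : ℤ) (U : Pt d → ℝ) : Pt d → ℝ := fun p => U (p.1 + (k : ℝ), p.2)

/-- Squared euclidean norm of the (classical) gradient of `U`:
`|∇U|² = (∂ₓU)² + Σᵢ (∂_{yᵢ}U)²`. -/
def gradSq (U : Pt d → ℝ) (p : Pt d) : ℝ :=
  (fderiv ℝ U p (1, 0)) ^ 2 +
    ∑ i : Fin d, (fderiv ℝ U p (0, EuclideanSpace.single i 1)) ^ 2

/-- Pointwise inner product `∇U · ∇W`. -/
def gradDot (U W : Pt d → ℝ) (p : Pt d) : ℝ :=
  fderiv ℝ U p (1, 0) * fderiv ℝ W p (1, 0) +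
    ∑ i : Fin d, fderiv ℝ U p (0, EuclideanSpace.single i 1) *
      fderiv ℝ W p (0, EuclideanSpace.single i 1)

/-- The Laplacian `ΔU = ∂ₓₓU + Σᵢ ∂_{yᵢyᵢ}U`. -/
def lapl (U : Pt d → ℝ) (p : Pt d) : ℝ :=
  fderiv ℝ (fun q => fderiv ℝ U q (1, 0)) p (1, 0) +
    ∑ i : Fin d, fderiv ℝ (fun q => fderiv ℝ U q (0, EuclideanSpace.single i 1)) p
      (0, EuclideanSpace.single i 1)

/-- The `L²` norm of `f` over `S`. -/
def l2norm (S : Set (Pt d)) (f : Pt d → ℝ) : ℝ := Real.sqrt (∫ p in S, f p ^ 2)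

/-- `U ∈ W^{1,2}_loc(Ω)` : on every slab `(k,k+1) × D`, `U` and its gradient
are square integrable. -/
def W12loc (D : Set (EuclideanSpace ℝ (Fin d))) (U : Pt d → ℝ) : Prop :=
  ∀ k : ℤ, MemLp U 2 (volume.restrict (slab (k : ℝ) ((k : ℝ) + 1) D)) ∧
    IntegrableOn (gradSq U) (slab (k : ℝ) ((k : ℝ) + 1) D)

/-- The class `Γ`. -/
def InGamma (D : Set (EuclideanSpace ℝ (Fin d))) (U : Pt d → ℝ) : Prop :=
  W12loc D U ∧ IntegrableOn (gradSq U) (Omeg D) ∧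
  Tendsto (fun k : ℤ => l2norm (Omeg1 D) (fun p => Ptr k U p - 1)) atBot (nhds 0) ∧
  Tendsto (fun k : ℤ => l2norm (Omeg1 D) (fun p => Ptr k U p + 1)) atTop (nhds 0)

/-- The energy functional `J_B(U) = ∫_Ω (½|∇U|² + B(x,y) V(U))`, valued in `[0,∞]`. -/
def Jfun (D : Set (EuclideanSpace ℝ (Fin d))) (B : Pt d → ℝ) (V : ℝ → ℝ)
    (U : Pt d → ℝ) : ℝ≥0∞ :=
  ∫⁻ p in Omeg D, ENNReal.ofReal (2⁻¹ * gradSq U p + B p * V (U p))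

/-- `Θ_B = inf { J_B(U) : U ∈ Γ }`. -/
def Theta (D : Set (EuclideanSpace ℝ (Fin d))) (B : Pt d → ℝ) (V : ℝ → ℝ) : ℝ≥0∞ :=
  ⨅ (U : Pt d → ℝ) (_ : InGamma D U), Jfun D B V U

/-- Conditions (V1)–(V3) on the double well potential. -/
def Vconds (V : ℝ → ℝ) : Prop :=
  ContDiff ℝ 1 V ∧ V (-1) = 0 ∧ V 1 = 0 ∧ (∀ t, 0 ≤ V t) ∧
    ∀ t, t ≠ -1 → t ≠ 1 → 0 < V t

/-- `D` is a bounded domain: open, bounded and nonempty. -/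
def NiceDomain (D : Set (EuclideanSpace ℝ (Fin d))) : Prop :=
  IsOpen D ∧ Bornology.IsBounded D ∧ D.Nonempty

/-- The filter `|(x,y)| → ∞`. -/
def atInfty (d : ℕ) : Filter (Pt d) := Filter.comap (fun p : Pt d => ‖p‖) Filter.atTop

/-- `ν` is the outward unit normal vector to `∂D` at `y`. -/
def OutwardNormal (D : Set (EuclideanSpace ℝ (Fin d))) (y ν : EuclideanSpace ℝ (Fin d)) :
    Prop :=
  ‖ν‖ = 1 ∧ ∃ ε > 0, ∀ t : ℝ, 0 < t → t < ε → y + t • ν ∉ closure D ∧ y - t • ν ∈ D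

/-- The Neumann boundary condition `∂u/∂ν = 0` on `ℝ × ∂D`. -/
def NeumannBC (D : Set (EuclideanSpace ℝ (Fin d))) (U : Pt d → ℝ) : Prop :=
  ∀ (x : ℝ) (y ν : EuclideanSpace ℝ (Fin d)), y ∈ frontier D → OutwardNormal D y ν →
    fderiv ℝ U (x, y) (0, ν) = 0

/-- `u` is a heteroclinic solution from `1` to `-1` of `-Δu + B(x,y)V'(u) = 0` in `Ω`
with the Neumann boundary condition, with limits uniform in `y ∈ D`. -/
def IsHeteroclinic (D : Set (EuclideanSpace ℝ (Fin d))) (B : Pt d → ℝ) (V : ℝ → ℝ)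
    (u : Pt d → ℝ) : Prop :=
  ContDiffOn ℝ 2 u (closure (Omeg D)) ∧
  (∀ p ∈ Omeg D, -lapl u p + B p * deriv V (u p) = 0) ∧
  NeumannBC D u ∧
  (∀ ε > 0, ∃ R : ℝ, ∀ x : ℝ, ∀ y ∈ D,
    (x ≤ -R → |u (x, y) - 1| < ε) ∧ (R ≤ x → |u (x, y) + 1| < ε))

/-- Class 1: `A` is `C¹`, asymptotic at infinity to a `1`-periodic (in `x`) `C¹`
function `Ap` (condition (A1)), with `0 < A0 = inf_Ω A ≤ A < Ap` on `Ω` (condition (A2)). -/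
def Class1 (D : Set (EuclideanSpace ℝ (Fin d))) (A Ap : Pt d → ℝ) (A0 : ℝ) : Prop :=
  ContDiffOn ℝ 1 A (closure (Omeg D)) ∧ ContDiffOn ℝ 1 Ap (closure (Omeg D)) ∧
  (∀ p : Pt d, Ap (p.1 + 1, p.2) = Ap p) ∧
  Tendsto (fun p : Pt d => A p - Ap p) (atInfty d) (nhds 0) ∧
  0 < A0 ∧ IsGLB (A '' Omeg D) A0 ∧
  ∀ p ∈ Omeg D, A p < Ap p

/-- Class 2 (Rabinowitz): `A` is `C¹` and
`0 < A0 = A(0,y) = inf_Ω A < liminf_{|(x,y)|→∞} A = A∞ < ∞` for all `y ∈ D`. -/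
def Class2 (D : Set (EuclideanSpace ℝ (Fin d))) (A : Pt d → ℝ) (A0 Ainf : ℝ) : Prop :=
  ContDiffOn ℝ 1 A (closure (Omeg D)) ∧
  0 < A0 ∧ (∀ y ∈ D, A ((0 : ℝ), y) = A0) ∧ IsGLB (A '' Omeg D) A0 ∧
  A0 < Ainf ∧ Filter.liminf A (atInfty d) = Ainf

/-- The rescaled coefficient `(x,y) ↦ A(εx, y)`. -/
def scaleA (ε : ℝ) (A : Pt d → ℝ) : Pt d → ℝ := fun p => A (ε * p.1, p.2)

/-- Truncation of `U` to `[-1,1]`. -/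
def truncU (U : Pt d → ℝ) : Pt d → ℝ := fun p => max (-1) (min 1 (U p))

/-- Weak convergence in `L²(S)`. -/
def WeakL2 (S : Set (Pt d)) (f : ℕ → Pt d → ℝ) (g : Pt d → ℝ) : Prop :=
  ∀ φ : Pt d → ℝ, MemLp φ 2 (volume.restrict S) →
    Tendsto (fun n => ∫ p in S, f n p * φ p) atTop (nhds (∫ p in S, g p * φ p))

/-- Weak convergence in `W^{1,2}(S)`: weak `L²` convergence of the functions and of
all their (weak) partial derivatives. -/
def WeakW12 (S : Set (Pt d)) (f : ℕ → Pt d → ℝ) (g : Pt d → ℝ) : Prop :=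
  WeakL2 S f g ∧
  WeakL2 S (fun n p => fderiv ℝ (f n) p (1, 0)) (fun p => fderiv ℝ g p (1, 0)) ∧
  ∀ i : Fin d, WeakL2 S (fun n p => fderiv ℝ (f n) p (0, EuclideanSpace.single i 1))
    (fun p => fderiv ℝ g p (0, EuclideanSpace.single i 1))

/-! Fix `U ∈ Γ` with `J_0(U) < ∞`, so that `Θ_ε ≤ J_ε(U)` for every `ε`. As `ε → 0`, the
coefficient `A(εx, y)` tends to `A(0, y) = A₀` pointwise on `Ω` and stays below a bound `C`;
since `A₀ > 0`, `J_C(U) ≤ max(1, C/A₀) J_0(U) < ∞`, so dominated convergence gives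
`J_ε(U) → J_0(U)`. -/

lemma omeg_ae_subset_iUnion_slab (D : Set (EuclideanSpace ℝ (Fin d))) :
    Omeg D ≤ᵐ[volume] ⋃ k : ℤ, slab (k : ℝ) ((k : ℝ) + 1) D := by
  have hnull : volume (Set.range ((↑) : ℤ → ℝ) ×ˢ (Set.univ : Set (EuclideanSpace ℝ (Fin d))))
      = 0 := by
    rw [Measure.volume_eq_prod, Measure.prod_prod,
      (Set.countable_range ((↑) : ℤ → ℝ)).measure_zero, zero_mul]
  refine ae_le_set.2 (measure_mono_null (fun p ⟨hp, hp'⟩ => ?_) hnull)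
  refine ⟨?_, Set.mem_univ _⟩
  by_contra hx
  refine hp' (Set.mem_iUnion.2 ⟨⌊p.1⌋, ⟨?_, Int.lt_floor_add_one p.1⟩, hp.2⟩)
  exact (Int.floor_le p.1).lt_of_ne fun h => hx ⟨⌊p.1⌋, h⟩

lemma W12loc.aemeasurable {D : Set (EuclideanSpace ℝ (Fin d))} {U : Pt d → ℝ}
    (hU : W12loc D U) : AEMeasurable U (volume.restrict (Omeg D)) :=
  (aemeasurable_iUnion_iff.2 fun k => (hU k).1.aemeasurable).mono_measure
    (Measure.restrict_mono_ae (omeg_ae_subset_iUnion_slab D))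

lemma measurable_gradSq (U : Pt d → ℝ) : Measurable (gradSq U) :=
  ((measurable_fderiv_apply_const ℝ U _).pow_const 2).add
    (Finset.measurable_sum _ fun _ _ => (measurable_fderiv_apply_const ℝ U _).pow_const 2)

lemma gradSq_nonneg (U : Pt d → ℝ) (p : Pt d) : 0 ≤ gradSq U p :=
  add_nonneg (sq_nonneg _) (Finset.sum_nonneg fun _ _ => sq_nonneg _)

lemma Jfun_const_le_mul {D : Set (EuclideanSpace ℝ (Fin d))} {V : ℝ → ℝ}
    (hV : ∀ t, 0 ≤ V t) (U : Pt d → ℝ) {a : ℝ} (ha : 0 < a) (c : ℝ) :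
    Jfun D (fun _ => c) V U ≤ ENNReal.ofReal (max 1 (c / a)) * Jfun D (fun _ => a) V U := by
  rw [Jfun, Jfun, ← lintegral_const_mul' _ _ ENNReal.ofReal_ne_top]
  refine lintegral_mono fun p => ?_
  rw [← ENNReal.ofReal_mul (by positivity)]
  refine ENNReal.ofReal_le_ofReal ?_
  have hc : c ≤ max 1 (c / a) * a := by
    rw [← div_le_iff₀ ha]; exact le_max_right _ _
  have hg := mul_nonneg (by norm_num : (0 : ℝ) ≤ 2⁻¹) (gradSq_nonneg U p)
  nlinarith [le_max_left 1 (c / a), hV (U p)]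

theorem tendsto_Jfun_of_tendsto {ι : Type*} {l : Filter ι} [l.IsCountablyGenerated]
    {D : Set (EuclideanSpace ℝ (Fin d))} (hD : MeasurableSet (Omeg D))
    {V : ℝ → ℝ} (hV : ∀ t, 0 ≤ V t) (hVm : Measurable V)
    {U : Pt d → ℝ} (hU : AEMeasurable U (volume.restrict (Omeg D)))
    {B : ι → Pt d → ℝ} {B₀ : Pt d → ℝ} {C : ℝ}
    (hBm : ∀ i, AEMeasurable (B i) (volume.restrict (Omeg D)))
    (hBC : ∀ i, ∀ p ∈ Omeg D, B i p ≤ C)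
    (hB₀ : ∀ p ∈ Omeg D, Tendsto (fun i => B i p) l (𝓝 (B₀ p)))
    (hfin : Jfun D (fun _ => C) V U ≠ ⊤) :
    Tendsto (fun i => Jfun D (B i) V U) l (𝓝 (Jfun D B₀ V U)) := by
  refine tendsto_lintegral_filter_of_dominated_convergence' _
    (Eventually.of_forall fun i => ?_) (Eventually.of_forall fun i => ?_) hfin ?_
  · exact ENNReal.measurable_ofReal.comp_aemeasurable
      (((measurable_gradSq U).const_mul _).aemeasurable.add
        ((hBm i).mul (hVm.comp_aemeasurable hU)))
  · filter_upwards [ae_restrict_mem hD] with p hp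
    exact ENNReal.ofReal_le_ofReal (by nlinarith [hBC i p hp, hV (U p)])
  · filter_upwards [ae_restrict_mem hD] with p hp
    exact (ENNReal.continuous_ofReal.tendsto _).comp
      (tendsto_const_nhds.add ((hB₀ p hp).mul tendsto_const_nhds))

lemma continuousOn_scaleA {D : Set (EuclideanSpace ℝ (Fin d))} {A : Pt d → ℝ}
    (hA : ContinuousOn A (Omeg D)) (ε : ℝ) : ContinuousOn (scaleA ε A) (Omeg D) :=
  hA.comp (by fun_prop) fun p hp => ⟨Set.mem_univ _, hp.2⟩

lemma tendsto_scaleA_zero {D : Set (EuclideanSpace ℝ (Fin d))} {A : Pt d → ℝ}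
    (hA : ContinuousOn A (Omeg D)) {p : Pt d} (hp : p ∈ Omeg D) :
    Tendsto (fun ε => scaleA ε A p) (𝓝 0) (𝓝 (A (0, p.2))) := by
  have hpath : Tendsto (fun ε : ℝ => ((ε * p.1, p.2) : Pt d)) (𝓝 0) (𝓝[Omeg D] (0, p.2)) :=
    tendsto_nhdsWithin_of_tendsto_nhds_of_eventually_within _
      ((Continuous.tendsto' (by fun_prop) 0 _ (by simp)))
      (Eventually.of_forall fun _ => ⟨Set.mem_univ _, hp.2⟩)
  exact (hA (0, p.2) ⟨Set.mem_univ _, hp.2⟩).tendsto.comp hpath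

theorem statement13_general (N : ℕ)
    (D : Set (EuclideanSpace ℝ (Fin (N - 1)))) (hD : NiceDomain D)
    (V : ℝ → ℝ) (hV : Vconds V)
    (A : Pt (N - 1) → ℝ) (A0 Ainf : ℝ) (hA : Class2 D A A0 Ainf)
    (hAbd : ∃ C : ℝ, ∀ p ∈ closure (Omeg D), |A p| ≤ C) :
    Filter.limsup (fun ε : ℝ => Theta D (scaleA ε A) V) (nhdsWithin 0 (Set.Ioi 0)) ≤
      Theta D (fun _ => A0) V := by
  obtain ⟨C, hC⟩ := hAbd
  obtain ⟨hAc, hA0, hA0y, -⟩ := hA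
  obtain ⟨hVc, -, -, hV0, -⟩ := hV
  have hAc : ContinuousOn A (Omeg D) := hAc.continuousOn.mono subset_closure
  have hΩ : MeasurableSet (Omeg D) := MeasurableSet.univ.prod hD.1.measurableSet
  refine le_iInf₂ fun U hU => ?_
  rcases eq_or_ne (Jfun D (fun _ => A0) V U) ⊤ with htop | hfin
  · simp [htop]
  have hlim : Tendsto (fun ε => Jfun D (scaleA ε A) V U) (𝓝[>] 0)
      (𝓝 (Jfun D (fun _ => A0) V U)) :=
    tendsto_Jfun_of_tendsto hΩ hV0 hVc.continuous.measurable hU.1.aemeasurable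
      (fun ε => (continuousOn_scaleA hAc ε).aemeasurable hΩ)
      (fun ε p hp => (abs_le.1 (hC (ε * p.1, p.2) (subset_closure ⟨Set.mem_univ _, hp.2⟩))).2)
      (fun p hp => hA0y p.2 hp.2 ▸ (tendsto_scaleA_zero hAc hp).mono_left nhdsWithin_le_nhds)
      (ne_top_of_le_ne_top (ENNReal.mul_ne_top ENNReal.ofReal_ne_top hfin)
        (Jfun_const_le_mul hV0 U hA0 C))
  calc limsup (fun ε => Theta D (scaleA ε A) V) (𝓝[>] 0)
      ≤ limsup (fun ε => Jfun D (scaleA ε A) V U) (𝓝[>] 0) :=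
        limsup_le_limsup (Eventually.of_forall fun _ => iInf₂_le U hU)
    _ = Jfun D (fun _ => A0) V U := hlim.limsup_eq

theorem statement13 (N : ℕ) (hN : 2 ≤ N)
    (D : Set (EuclideanSpace ℝ (Fin (N - 1)))) (hD : NiceDomain D)
    (V : ℝ → ℝ) (hV : Vconds V)
    (A : Pt (N - 1) → ℝ) (A0 Ainf : ℝ) (hA : Class2 D A A0 Ainf)
    (hAbd : ∃ C : ℝ, ∀ p ∈ closure (Omeg D), |A p| ≤ C) :
    Filter.limsup (fun ε : ℝ => Theta D (scaleA ε A) V) (nhdsWithin 0 (Set.Ioi 0)) ≤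
      Theta D (fun _ => A0) V :=
  statement13_general N D hD V hV A A0 Ainf hA hAbd

end Het
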